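/- arXiv:1912.11754 — 7 statements merged into one kernel-verified Lean document; each statement's English description precedes it below -/
import Mathlib

section
/- Let R be a commutative ring, λ ∈ R, let A and C be n×n λ-circulant matrices over R, and let J be the n×n back-diagonal (exchange) matrix. Then A·J·Cᵀ − C·J·Aᵀ = 0; equivalently, setting C' = CJ, one has A·C' = C'·Aᵀ. -/
open Matrix

/-- A matrix is circulant if `A i j` depends only on `j - i` computed in `ZMod n`. -/
def IsCirculant {R : Type*} [CommRing R] {n : ℕ} (A : Matrix (Fin n) (Fin n) R) : Prop :=
  ∃ a : ZMod n → R, ∀ i j : Fin n, A i j = a (((j : ℕ) : ZMod n) - ((i : ℕ) : ZMod n))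

/-- A matrix is reverse-circulant if `A i j` depends only on `i + j` computed in `ZMod n`. -/
def IsRevCirculant {R : Type*} [CommRing R] {n : ℕ} (A : Matrix (Fin n) (Fin n) R) : Prop :=
  ∃ c : ZMod n → R, ∀ i j : Fin n, A i j = c (((i : ℕ) : ZMod n) + ((j : ℕ) : ZMod n))

/-- A matrix is `λ`-circulant if each row is the `λ`-cyclic shift of the previous one:
`A i j = a (j - i)` when `i ≤ j` and `A i j = λ * a (n + j - i)` when `i > j`. -/
def IsLamCirculant {R : Type*} [CommRing R] {n : ℕ} (lam : R)
    (A : Matrix (Fin n) (Fin n) R) : Prop :=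
  ∃ a : ℕ → R, ∀ i j : Fin n,
    A i j = if (i : ℕ) ≤ (j : ℕ) then a ((j : ℕ) - (i : ℕ))
      else lam * a (n + (j : ℕ) - (i : ℕ))

/-- The back-diagonal (exchange) matrix: `J i j = 1` iff `i + j = n - 1`. -/
def exchMatrix (R : Type*) [CommRing R] (n : ℕ) : Matrix (Fin n) (Fin n) R :=
  Matrix.of fun i j => if (i : ℕ) + (j : ℕ) = n - 1 then 1 else 0

lemma mul_exch_apply {R : Type*} [CommRing R] {n : ℕ} (M : Matrix (Fin n) (Fin n) R)
    (i k : Fin n) : (M * exchMatrix R n) i k = M i k.rev := by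
  rw [Matrix.mul_apply]
  have h : ∀ l : Fin n, M i l * exchMatrix R n l k = if l = k.rev then M i l else 0 := by
    intro l
    simp only [exchMatrix, Matrix.of_apply, Fin.ext_iff, Fin.val_rev]
    split_ifs <;> first | (exfalso; omega) | ring
  simp_rw [h, Finset.sum_ite_eq' Finset.univ k.rev, Finset.mem_univ, if_true]

lemma exch_mul_apply {R : Type*} [CommRing R] {n : ℕ} (M : Matrix (Fin n) (Fin n) R)
    (k j : Fin n) : (exchMatrix R n * M) k j = M k.rev j := by
  rw [Matrix.mul_apply]
  have h : ∀ l : Fin n, exchMatrix R n k l * M l j = if l = k.rev then M l j else 0 := by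
    intro l
    simp only [exchMatrix, Matrix.of_apply, Fin.ext_iff, Fin.val_rev]
    split_ifs <;> first | (exfalso; omega) | ring
  simp_rw [h, Finset.sum_ite_eq' Finset.univ k.rev, Finset.mem_univ, if_true]

def sigmaIdx (n i j k : ℕ) : ℕ :=
  if n + (n - 1 - k) + j - i < n then n + (n - 1 - k) + j - i
  else if n + (n - 1 - k) + j - i < 2*n then n + (n - 1 - k) + j - i - n
  else n + (n - 1 - k) + j - i - 2*n

lemma sigmaIdx_lt {n i j k : ℕ} (hi : i < n) (hj : j < n) (hk : k < n) :
    sigmaIdx n i j k < n := by unfold sigmaIdx; split_ifs <;> omega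

lemma sigmaIdx_invol {n i j k : ℕ} (hi : i < n) (hj : j < n) (hk : k < n) :
    sigmaIdx n i j (sigmaIdx n i j k) = k := by unfold sigmaIdx; split_ifs <;> omega

lemma sigmaIdx_rel {n i j k : ℕ} (hi : i < n) (hj : j < n) (hk : k < n) :
    sigmaIdx n i j k + i + k + 1 = j ∨ sigmaIdx n i j k + i + k + 1 = j + n ∨
      sigmaIdx n i j k + i + k + 1 = j + 2*n := by unfold sigmaIdx; split_ifs <;> omega

set_option linter.unnecessarySeqFocus false in
lemma entry_key {R : Type*} [CommRing R] (lam : R) (a c : ℕ → R) {n i j k k' : ℕ}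
    (hi : i < n) (hj : j < n) (hk : k < n) (hk' : k' < n)
    (hrel : k' + i + k + 1 = j ∨ k' + i + k + 1 = j + n ∨ k' + i + k + 1 = j + 2*n) :
    (if i ≤ n - (k + 1) then a (n - (k + 1) - i) else lam * a (n + (n - (k + 1)) - i)) *
      (if j ≤ k then c (k - j) else lam * c (n + k - j)) =
    (if i ≤ n - (k' + 1) then c (n - (k' + 1) - i) else lam * c (n + (n - (k' + 1)) - i)) *
      (if j ≤ k' then a (k' - j) else lam * a (n + k' - j)) := by
  split_ifs <;>
    first
      | (exfalso; omega)
      | ((first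
           | rw [show k' - j = n - (k + 1) - i from by omega]
           | rw [show k' - j = n + (n - (k + 1)) - i from by omega]
           | rw [show n + k' - j = n - (k + 1) - i from by omega]
           | rw [show n + k' - j = n + (n - (k + 1)) - i from by omega]) <;>
         (first
           | rw [show n - (k' + 1) - i = k - j from by omega]
           | rw [show n - (k' + 1) - i = n + k - j from by omega]
           | rw [show n + (n - (k' + 1)) - i = k - j from by omega]
           | rw [show n + (n - (k' + 1)) - i = n + k - j from by omega]) <;>
         ring)

/-- If `A` and `C` are `λ`-circulant and `J` is the exchange matrix,
then `A * J * Cᵀ - C * J * Aᵀ = 0`; equivalently `A * (C * J) = (C * J) * Aᵀ`. -/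
theorem lamCirculant_exch_identity {R : Type*} [CommRing R] {n : ℕ} (lam : R)
    (A C : Matrix (Fin n) (Fin n) R)
    (hA : IsLamCirculant lam A) (hC : IsLamCirculant lam C) :
    A * exchMatrix R n * Cᵀ - C * exchMatrix R n * Aᵀ = 0 ∧
      A * (C * exchMatrix R n) = (C * exchMatrix R n) * Aᵀ := by
  obtain ⟨a, ha⟩ := hA
  obtain ⟨c, hc⟩ := hC
  have L2 : A * exchMatrix R n * Cᵀ = C * exchMatrix R n * Aᵀ := by
    ext i j
    rw [Matrix.mul_apply, Matrix.mul_apply]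
    simp_rw [mul_exch_apply, Matrix.transpose_apply]
    -- goal: ∑ k, A i k.rev * C j k = ∑ k, C i k.rev * A j k
    have hb : Function.Bijective
        (fun k : Fin n => (⟨sigmaIdx n i j k, sigmaIdx_lt i.isLt j.isLt k.isLt⟩ : Fin n)) := by
      apply Function.Involutive.bijective
      intro k
      exact Fin.ext (sigmaIdx_invol i.isLt j.isLt k.isLt)
    refine Fintype.sum_bijective _ hb _ _ (fun k => ?_)
    rw [ha, hc, hc, ha]
    simp only [Fin.val_rev]
    exact entry_key lam a c i.isLt j.isLt k.isLt (sigmaIdx_lt i.isLt j.isLt k.isLt)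
      (sigmaIdx_rel i.isLt j.isLt k.isLt)
  have L1 : C * exchMatrix R n = exchMatrix R n * Cᵀ := by
    ext i j
    rw [mul_exch_apply, exch_mul_apply, Matrix.transpose_apply]
    rw [hc, hc]
    simp only [Fin.val_rev]
    split_ifs <;>
      first
        | (exfalso; omega)
        | rw [show n - (↑j + 1) - ↑i = n - (↑i + 1) - ↑j from by omega]
        | rw [show n + (n - (↑j + 1)) - ↑i = n + (n - (↑i + 1)) - ↑j from by omega]
  constructor
  · rw [L2, sub_self]
  · calc A * (C * exchMatrix R n) = A * (exchMatrix R n * Cᵀ) := by rw [L1]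
      _ = A * exchMatrix R n * Cᵀ := by rw [mul_assoc]
      _ = C * exchMatrix R n * Aᵀ := L2
end

section
/- Let R be a commutative ring, let A be an n×n circulant matrix over R that is symmetric (Aᵀ = A), and let C be an n×n reverse-circulant matrix over R. Then A and C commute: AC = CA. -/
open Matrix

/-- A symmetric circulant matrix commutes with any reverse-circulant matrix. -/
theorem symm_circulant_commutes_revCirculant {R : Type*} [CommRing R] {n : ℕ}
    (A C : Matrix (Fin n) (Fin n) R)
    (hA : IsCirculant A) (hAsymm : Aᵀ = A) (hC : IsRevCirculant C) :
    A * C = C * A := by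
  rcases n with _ | m
  · exact Subsingleton.elim _ _
  obtain ⟨a, ha⟩ := hA
  obtain ⟨c, hc⟩ := hC
  -- symmetry of `a`
  have hax : ∀ x : ZMod (m + 1), a (-x) = a x := by
    intro x
    have hxv : ((x.val : ℕ) : ZMod (m + 1)) = x := ZMod.natCast_rightInverse x
    have h := congrFun (congrFun hAsymm (0 : Fin (m + 1))) ⟨x.val, x.val_lt⟩
    simp only [Matrix.transpose_apply, ha] at h
    simpa [hxv] using h
  ext i j
  simp only [Matrix.mul_apply, ha, hc]
  set dz : ZMod (m + 1) := ((j : ℕ) : ZMod (m + 1)) - ((i : ℕ) : ZMod (m + 1)) with hdz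
  have hd : (((⟨dz.val, dz.val_lt⟩ : Fin (m + 1)) : ℕ) : ZMod (m + 1)) = dz :=
    ZMod.natCast_rightInverse dz
  set d : Fin (m + 1) := ⟨dz.val, dz.val_lt⟩ with hdf
  have key : ∀ k x : Fin (m + 1),
      (((k + x : Fin (m + 1)) : ℕ) : ZMod (m + 1))
        = ((k : ℕ) : ZMod (m + 1)) + ((x : ℕ) : ZMod (m + 1)) := by
    intro k x
    rw [Fin.val_add, ZMod.natCast_mod, Nat.cast_add]
  refine Fintype.sum_bijective (· + d) (Equiv.addRight d).bijective _ _ ?_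
  intro k
  rw [key, hd]
  have h1 : ((i : ℕ) : ZMod (m + 1)) + (((k : ℕ) : ZMod (m + 1)) + dz)
      = ((k : ℕ) : ZMod (m + 1)) + ((j : ℕ) : ZMod (m + 1)) := by
    rw [hdz]; ring
  have h2 : ((j : ℕ) : ZMod (m + 1)) - (((k : ℕ) : ZMod (m + 1)) + dz)
      = -(((k : ℕ) : ZMod (m + 1)) - ((i : ℕ) : ZMod (m + 1))) := by
    rw [hdz]; ring
  rw [h1, h2, hax, mul_comm]
end

section
/- Let R be a commutative ring of characteristic 2, let A and B be n×n circulant matrices over R, and let C be an n×n reverse-circulant matrix over R. Assume that A·Aᵀ + B·Bᵀ + C² = I_n and that A·C = C·A. Then the 2n×2n block matrix M = [[A, B + C], [Bᵀ + C, Aᵀ]] satisfies M·Mᵀ = I_{2n}. -/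
open Matrix

section AuxHelpers
variable {R : Type*} [CommRing R] {n : ℕ}

variable {R : Type*} [CommRing R] {n : ℕ}

def finZModEquiv (n : ℕ) [NeZero n] : Fin n ≃ ZMod n where
  toFun k := ((k : ℕ) : ZMod n)
  invFun x := ⟨x.val, x.val_lt⟩
  left_inv k := by ext; simp [ZMod.val_cast_of_lt k.isLt]
  right_inv x := by simp [ZMod.natCast_rightInverse x]

lemma sum_fin_zmod [NeZero n] (f : ZMod n → R) :
    ∑ k : Fin n, f ((k : ℕ) : ZMod n) = ∑ x : ZMod n, f x :=
  Fintype.sum_equiv (finZModEquiv n) _ _ (fun _ => rfl)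

lemma circ_mul_comm [NeZero n] {A B : Matrix (Fin n) (Fin n) R}
    (hA : IsCirculant A) (hB : IsCirculant B) : A * B = B * A := by
  obtain ⟨a, ha⟩ := hA; obtain ⟨b, hb⟩ := hB
  ext i j
  simp only [Matrix.mul_apply, ha, hb]
  rw [sum_fin_zmod (fun x => a (x - ((i:ℕ):ZMod n)) * b (((j:ℕ):ZMod n) - x)),
      sum_fin_zmod (fun x => b (x - ((i:ℕ):ZMod n)) * a (((j:ℕ):ZMod n) - x))]
  apply Fintype.sum_equiv ((Equiv.neg (ZMod n)).trans (Equiv.addLeft (((i:ℕ):ZMod n) + ((j:ℕ):ZMod n))))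
  intro x
  simp only [Equiv.trans_apply, Equiv.neg_apply, Equiv.coe_addLeft]
  rw [mul_comm]
  ring_nf

lemma rev_symm {C : Matrix (Fin n) (Fin n) R} (hC : IsRevCirculant C) : Cᵀ = C := by
  obtain ⟨c, hc⟩ := hC
  ext i j
  rw [Matrix.transpose_apply, hc, hc, add_comm]

lemma circ_transpose {A : Matrix (Fin n) (Fin n) R} (hA : IsCirculant A) :
    IsCirculant Aᵀ := by
  obtain ⟨a, ha⟩ := hA
  exact ⟨fun x => a (-x), fun i j => by rw [Matrix.transpose_apply, ha]; ring_nf⟩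

lemma circ_mul_rev [NeZero n] {B C : Matrix (Fin n) (Fin n) R}
    (hB : IsCirculant B) (hC : IsRevCirculant C) : IsRevCirculant (B * C) := by
  obtain ⟨b, hb⟩ := hB; obtain ⟨c, hc⟩ := hC
  refine ⟨fun s => ∑ x : ZMod n, b x * c (x + s), fun i j => ?_⟩
  simp only [Matrix.mul_apply, hb, hc]
  rw [sum_fin_zmod (fun x => b (x - ((i:ℕ):ZMod n)) * c (x + ((j:ℕ):ZMod n)))]
  apply Fintype.sum_equiv (Equiv.subRight (((i:ℕ):ZMod n)))
  intro x
  simp only [Equiv.subRight_apply]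
  ring_nf

lemma rev_mul_circ [NeZero n] {B C : Matrix (Fin n) (Fin n) R}
    (hC : IsRevCirculant C) (hB : IsCirculant B) : IsRevCirculant (C * B) := by
  obtain ⟨c, hc⟩ := hC; obtain ⟨b, hb⟩ := hB
  refine ⟨fun s => ∑ x : ZMod n, c (s - x) * b x, fun i j => ?_⟩
  simp only [Matrix.mul_apply, hc, hb]
  rw [sum_fin_zmod (fun x => c (((i:ℕ):ZMod n) + x) * b (((j:ℕ):ZMod n) - x))]
  apply Fintype.sum_equiv ((Equiv.neg (ZMod n)).trans (Equiv.addLeft (((j:ℕ):ZMod n))))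
  intro x
  simp only [Equiv.trans_apply, Equiv.neg_apply, Equiv.coe_addLeft]
  ring_nf

lemma two_eq_zero' [CharP R 2] (X : Matrix (Fin n) (Fin n) R) : X + X = 0 := by
  rw [← two_smul R X, show (2:R) = 0 from by exact_mod_cast CharP.cast_eq_zero R 2, zero_smul]


end AuxHelpers

/-- over a commutative ring of characteristic 2, if
`A Aᵀ + B Bᵀ + C² = I` and `AC = CA`, then the block matrix
`M = [[A, B + C], [Bᵀ + C, Aᵀ]]` satisfies `M Mᵀ = I`. -/
theorem fromBlocks_mul_transpose_eq_one {R : Type*} [CommRing R] [CharP R 2] {n : ℕ}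
    (A B C : Matrix (Fin n) (Fin n) R)
    (hA : IsCirculant A) (hB : IsCirculant B) (hC : IsRevCirculant C)
    (h1 : A * Aᵀ + B * Bᵀ + C ^ 2 = 1) (h2 : A * C = C * A) :
    Matrix.fromBlocks A (B + C) (Bᵀ + C) Aᵀ *
      (Matrix.fromBlocks A (B + C) (Bᵀ + C) Aᵀ)ᵀ = 1 := by
  --

  rcases Nat.eq_zero_or_pos n with rfl | hn
  · ext i j; exact (i.elim (fun x => x.elim0) (fun x => x.elim0))
  have : NeZero n := ⟨hn.ne'⟩
  have hCs : Cᵀ = C := rev_symm hC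
  have hBt : IsCirculant Bᵀ := circ_transpose hB
  have hAt : IsCirculant Aᵀ := circ_transpose hA
  have hAB : A * B = B * A := circ_mul_comm hA hB
  have hAtBt : Aᵀ * Bᵀ = Bᵀ * Aᵀ := circ_mul_comm hAt hBt
  have hAAt : A * Aᵀ = Aᵀ * A := circ_mul_comm hA hAt
  have hBBt : B * Bᵀ = Bᵀ * B := circ_mul_comm hB hBt
  have hAtC : Aᵀ * C = C * Aᵀ := by
    have := congrArg Matrix.transpose h2
    rw [Matrix.transpose_mul, Matrix.transpose_mul, hCs] at this
    exact this.symm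
  -- B*C = C*Bᵀ  and  Bᵀ*C = C*B
  have hBC : C * Bᵀ = B * C := by
    have h := rev_symm (circ_mul_rev hB hC)
    rwa [Matrix.transpose_mul, hCs] at h
  have hCB : Bᵀ * C = C * B := by
    have h := rev_symm (rev_mul_circ hC hB)
    rwa [Matrix.transpose_mul, hCs] at h
  rw [Matrix.fromBlocks_transpose, Matrix.fromBlocks_multiply, ← Matrix.fromBlocks_one]
  refine Matrix.fromBlocks_inj.mpr ⟨?_, ?_, ?_, ?_⟩
  · calc A * Aᵀ + (B + C) * (B + C)ᵀ
        = (A * Aᵀ + B * Bᵀ + C ^ 2) + (B * C + B * C) := by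
          simp only [Matrix.transpose_add, Matrix.transpose_transpose, hCs, add_mul, mul_add]
          rw [hBC, ← pow_two]; abel
      _ = 1 := by rw [two_eq_zero', add_zero, h1]
  · calc A * (Bᵀ + C)ᵀ + (B + C) * Aᵀᵀ
        = (A * B + B * A) + (A * C + C * A) := by
          simp only [Matrix.transpose_add, Matrix.transpose_transpose, hCs, add_mul, mul_add]
          abel
      _ = 0 := by rw [hAB, h2, two_eq_zero', two_eq_zero', add_zero]
  · calc (Bᵀ + C) * Aᵀ + Aᵀ * (B + C)ᵀ
        = (Aᵀ * Bᵀ + Bᵀ * Aᵀ) + (Aᵀ * C + C * Aᵀ) := by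
          simp only [Matrix.transpose_add, Matrix.transpose_transpose, hCs, add_mul, mul_add]
          abel
      _ = 0 := by rw [hAtBt, hAtC, two_eq_zero', two_eq_zero', add_zero]
  · calc (Bᵀ + C) * (Bᵀ + C)ᵀ + Aᵀ * Aᵀᵀ
        = (A * Aᵀ + B * Bᵀ + C ^ 2) + (C * B + C * B) := by
          simp only [Matrix.transpose_add, Matrix.transpose_transpose, hCs, add_mul, mul_add]
          rw [hCB, ← hAAt, ← hBBt, ← pow_two]; abel
      _ = 1 := by rw [two_eq_zero', add_zero, h1]
end

section
/- Let K be a field of characteristic 2, and let A and B be n×n circulant matrices over K such that the code generated by (I_{2n} | M₀) with M₀ = [[A, B], [Bᵀ, Aᵀ]], i.e. the subspace {(x, M₀ᵀx) : x ∈ K^{2n}} of K^{4n}, is self-dual. Let C be any n×n reverse-circulant matrix over K that commutes with A and satisfies C² = 0. Then the code generated by (I_{2n} | M) with M = [[A, B + C], [Bᵀ + C, Aᵀ]], i.e. the subspace {(x, Mᵀx) : x ∈ K^{2n}} of K^{4n}, is also self-dual. -/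
open Matrix

/-- The dual of a code (submodule of `ι → K`) w.r.t. the Euclidean inner product. -/
def dualCode {K : Type*} [CommRing K] {ι : Type*} [Fintype ι]
    (C : Submodule K (ι → K)) : Submodule K (ι → K) where
  carrier := {x | ∀ y ∈ C, ∑ i, x i * y i = 0}
  zero_mem' := by intro y _; simp
  add_mem' := by
    intro a b ha hb y hy
    simp only [Set.mem_setOf_eq] at ha hb ⊢
    simp [Pi.add_apply, add_mul, Finset.sum_add_distrib, ha y hy, hb y hy]
  smul_mem' := by
    intro c a ha y hy
    simp only [Set.mem_setOf_eq] at ha ⊢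
    simp [Pi.smul_apply, smul_eq_mul, mul_assoc, ← Finset.mul_sum, ha y hy]

/-- The code generated by the block matrix `(I | M)`: the row space
`{(x, Mᵀx) : x ∈ K^ι}` inside `K^(ι ⊕ ι)`. -/
def genCode {K : Type*} [CommRing K] {ι : Type*} [Fintype ι]
    (M : Matrix ι ι K) : Submodule K (ι ⊕ ι → K) where
  carrier := {v | ∃ x : ι → K, v = Sum.elim x (Matrix.mulVec (Matrix.transpose M) x)}
  zero_mem' := ⟨0, by funext s; cases s <;> simp [Matrix.mulVec_zero]⟩
  add_mem' := by
    rintro a b ⟨x, rfl⟩ ⟨y, rfl⟩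
    exact ⟨x + y, by funext s; cases s <;> simp [Matrix.mulVec_add]⟩
  smul_mem' := by
    rintro c a ⟨x, rfl⟩
    exact ⟨c • x, by funext s; cases s <;> simp [Matrix.mulVec_smul]⟩


lemma mem_genCode {K : Type*} [CommRing K] {ι : Type*} [Fintype ι]
    (M : Matrix ι ι K) (v : ι ⊕ ι → K) :
    v ∈ genCode M ↔ ∃ x : ι → K, v = Sum.elim x (Matrix.mulVec (Matrix.transpose M) x) :=
  Iff.rfl

lemma mem_dualCode {K : Type*} [CommRing K] {ι : Type*} [Fintype ι]
    (C : Submodule K (ι → K)) (x : ι → K) :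
    x ∈ dualCode C ↔ ∀ y ∈ C, ∑ i, x i * y i = 0 :=
  Iff.rfl

lemma sum_zmod_aux {M : Type*} [AddCommMonoid M] {n : ℕ} [NeZero n] (f : ZMod n → M) :
    ∑ k : Fin n, f ((k : ℕ) : ZMod n) = ∑ z : ZMod n, f z := by
  have hb : Function.Bijective (fun k : Fin n => ((k : ℕ) : ZMod n)) := by
    refine ⟨fun a b h => ?_, fun z => ⟨⟨z.val, z.val_lt⟩, ZMod.natCast_zmod_val z⟩⟩
    have := congrArg ZMod.val h
    rw [ZMod.val_cast_of_lt a.2, ZMod.val_cast_of_lt b.2] at this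
    exact Fin.val_injective this
  exact Fintype.sum_bijective _ hb _ _ (fun k => rfl)

lemma circ_mul_rev_s8 {K : Type*} [CommRing K] {n : ℕ} {X C : Matrix (Fin n) (Fin n) K}
    (hX : IsCirculant X) (hC : IsRevCirculant C) : X * C = C * Xᵀ := by
  obtain ⟨x, hx⟩ := hX
  obtain ⟨c, hc⟩ := hC
  ext i j
  cases n with
  | zero => exact i.elim0
  | succ m =>
    simp only [Matrix.mul_apply, Matrix.transpose_apply]
    calc ∑ k : Fin (m+1), X i k * C k j
        = ∑ z : ZMod (m+1), x (z - ((i : ℕ) : ZMod (m+1))) * c (z + ((j : ℕ) : ZMod (m+1))) := by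
          rw [← sum_zmod_aux (fun z => x (z - ((i : ℕ) : ZMod (m+1))) * c (z + ((j : ℕ) : ZMod (m+1))))]
          refine Finset.sum_congr rfl (fun k _ => ?_)
          rw [hx, hc]
      _ = ∑ z : ZMod (m+1), c (((i : ℕ) : ZMod (m+1)) + z) * x (z - ((j : ℕ) : ZMod (m+1))) := by
          refine Fintype.sum_equiv
            (Equiv.addRight (((j : ℕ) : ZMod (m+1)) - ((i : ℕ) : ZMod (m+1)))) _ _ (fun z => ?_)
          simp only [Equiv.coe_addRight]
          rw [mul_comm]
          congr 1 <;> ring_nf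
      _ = ∑ k : Fin (m+1), C i k * X j k := by
          rw [← sum_zmod_aux (fun z => c (((i : ℕ) : ZMod (m+1)) + z) * x (z - ((j : ℕ) : ZMod (m+1))))]
          refine Finset.sum_congr rfl (fun k _ => ?_)
          rw [hx, hc]

lemma revCirculant_symm {K : Type*} [CommRing K] {n : ℕ} {C : Matrix (Fin n) (Fin n) K}
    (hC : IsRevCirculant C) : Cᵀ = C := by
  obtain ⟨c, hc⟩ := hC
  ext i j
  rw [Matrix.transpose_apply, hc, hc, add_comm]

lemma circulant_transpose {K : Type*} [CommRing K] {n : ℕ} {X : Matrix (Fin n) (Fin n) K}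
    (hX : IsCirculant X) : IsCirculant Xᵀ := by
  obtain ⟨a, ha⟩ := hX
  refine ⟨fun z => a (-z), fun i j => ?_⟩
  rw [Matrix.transpose_apply, ha]
  congr 1
  ring

lemma selfDual_iff {K : Type*} [Field K] [CharP K 2] {ι : Type*} [Fintype ι] [DecidableEq ι]
    (M : Matrix ι ι K) : genCode M = dualCode (genCode M) ↔ M * Mᵀ = 1 := by
  have htwo : (2 : K) = 0 := CharTwo.two_eq_zero
  constructor
  · intro h
    ext i j
    have hx : Sum.elim (Pi.single i 1) (Mᵀ *ᵥ Pi.single i 1) ∈ genCode M :=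
      (mem_genCode M _).mpr ⟨_, rfl⟩
    rw [h, mem_dualCode] at hx
    have h2 := hx (Sum.elim (Pi.single j 1) (Mᵀ *ᵥ Pi.single j 1))
      ((mem_genCode M _).mpr ⟨_, rfl⟩)
    rw [Fintype.sum_sum_type] at h2
    simp only [Sum.elim_inl, Sum.elim_inr] at h2
    have e1 : ∑ a, Pi.single i (1:K) a * Pi.single j 1 a = (1 : Matrix ι ι K) i j := by
      simp [Pi.single_apply, Matrix.one_apply, Finset.sum_ite_eq, eq_comm]
    have e2 : ∑ b, (Mᵀ *ᵥ Pi.single i (1:K)) b * (Mᵀ *ᵥ Pi.single j 1) b = (M * Mᵀ) i j := by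
      simp only [Matrix.mulVec_single_one]
      simp [Matrix.mul_apply, mul_comm]
    rw [e1, e2] at h2
    linear_combination h2 - (1 : Matrix ι ι K) i j * htwo
  · intro h
    have hMt : Mᵀ * M = 1 := mul_eq_one_comm.mp h
    apply le_antisymm
    · rintro v ⟨x, rfl⟩
      rw [mem_dualCode]
      rintro y ⟨z, rfl⟩
      rw [Fintype.sum_sum_type]
      simp only [Sum.elim_inl, Sum.elim_inr]
      have e3 : ∑ b, (Mᵀ *ᵥ x) b * (Mᵀ *ᵥ z) b = ∑ a, x a * z a := by
        have : ∑ b, (Mᵀ *ᵥ x) b * (Mᵀ *ᵥ z) b = (x ᵥ* M) ⬝ᵥ (Mᵀ *ᵥ z) := by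
          rw [Matrix.mulVec_transpose]
          rfl
        rw [this, Matrix.dotProduct_mulVec, Matrix.vecMul_vecMul, h, Matrix.vecMul_one]
        rfl
      rw [e3]
      exact CharTwo.add_self_eq_zero _
    · rintro v hv
      rw [mem_dualCode] at hv
      refine ⟨M *ᵥ (v ∘ Sum.inr), ?_⟩
      have hvr : ∀ x : ι → K,
          (∑ a, v (Sum.inl a) * x a) + ∑ b, v (Sum.inr b) * (Mᵀ *ᵥ x) b = 0 := by
        intro x
        have := hv _ ((mem_genCode M _).mpr ⟨x, rfl⟩)
        rw [Fintype.sum_sum_type] at this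
        simpa using this
      have hl : ∀ i, v (Sum.inl i) = (M *ᵥ (v ∘ Sum.inr)) i := by
        intro i
        have h4 := hvr (Pi.single i 1)
        have e4 : ∑ a, v (Sum.inl a) * (Pi.single i 1 : ι → K) a = v (Sum.inl i) := by
          simp [Pi.single_apply, Finset.sum_ite_eq]
        have e5 : ∑ b, v (Sum.inr b) * (Mᵀ *ᵥ (Pi.single i 1 : ι → K)) b
            = (M *ᵥ (v ∘ Sum.inr)) i := by
          simp only [Matrix.mulVec_single_one]
          simp [Matrix.mulVec, dotProduct, mul_comm]
        rw [e4, e5] at h4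
        have := CharTwo.neg_eq (R := K) ((M *ᵥ (v ∘ Sum.inr)) i)
        linear_combination h4 - (M *ᵥ (v ∘ Sum.inr)) i * htwo
      funext s
      cases s with
      | inl i => simpa using hl i
      | inr b =>
        show v (Sum.inr b) = (Mᵀ *ᵥ (M *ᵥ (v ∘ Sum.inr))) b
        rw [Matrix.mulVec_mulVec, hMt, Matrix.one_mulVec]
        rfl


/-- if the four circulant code generated by `(I | [[A, B], [Bᵀ, Aᵀ]])`
is self-dual and `C` is reverse-circulant with `AC = CA` and `C² = 0`, then the code
generated by `(I | [[A, B + C], [Bᵀ + C, Aᵀ]])` is also self-dual. -/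
theorem genFourCirculant_of_fourCirculant_selfDual {K : Type*} [Field K] [CharP K 2] {n : ℕ}
    (A B C : Matrix (Fin n) (Fin n) K)
    (hA : IsCirculant A) (hB : IsCirculant B)
    (hsd : genCode (Matrix.fromBlocks A B Bᵀ Aᵀ) =
      dualCode (genCode (Matrix.fromBlocks A B Bᵀ Aᵀ)))
    (hC : IsRevCirculant C) (hcomm : A * C = C * A) (hC2 : C ^ 2 = 0) :
    genCode (Matrix.fromBlocks A (B + C) (Bᵀ + C) Aᵀ) =
      dualCode (genCode (Matrix.fromBlocks A (B + C) (Bᵀ + C) Aᵀ)) := by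
  have htwo : (2 : K) = 0 := CharTwo.two_eq_zero
  have addself : ∀ X : Matrix (Fin n) (Fin n) K, X + X = 0 := fun X => by
    rw [← two_smul K X, htwo, zero_smul]
  have hCs : Cᵀ = C := revCirculant_symm hC
  have hBC : B * C = C * Bᵀ := circ_mul_rev_s8 hB hC
  have hAC : A * C = C * Aᵀ := circ_mul_rev_s8 hA hC
  have hBtC : Bᵀ * C = C * B := by
    have := circ_mul_rev_s8 (circulant_transpose hB) hC
    rwa [Matrix.transpose_transpose] at this
  have hAtC : Aᵀ * C = A * C := by
    have := circ_mul_rev_s8 (circulant_transpose hA) hC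
    rwa [Matrix.transpose_transpose, ← hcomm] at this
  rw [selfDual_iff] at hsd ⊢
  simp only [Matrix.fromBlocks_transpose, Matrix.transpose_transpose,
    Matrix.fromBlocks_multiply] at hsd
  simp only [Matrix.fromBlocks_transpose, Matrix.transpose_add, Matrix.transpose_transpose,
    hCs, Matrix.fromBlocks_multiply]
  have eTL : A * Aᵀ + (B + C) * (Bᵀ + C) = A * Aᵀ + B * Bᵀ := by
    rw [add_mul, mul_add, mul_add, ← hBC, ← pow_two, hC2, add_zero, add_assoc (B * Bᵀ),
      addself, add_zero]
  have eTR : A * (B + C) + (B + C) * A = A * B + B * A := by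
    rw [mul_add, add_mul, hcomm, add_add_add_comm, addself, add_zero]
  have eBL : (Bᵀ + C) * Aᵀ + Aᵀ * (Bᵀ + C) = Bᵀ * Aᵀ + Aᵀ * Bᵀ := by
    rw [add_mul, mul_add, ← hAC, hAtC, add_add_add_comm, addself, add_zero]
  have eBR : (Bᵀ + C) * (B + C) + Aᵀ * A = Bᵀ * B + Aᵀ * A := by
    rw [add_mul, mul_add, mul_add, hBtC, ← pow_two, hC2, add_zero, add_assoc (Bᵀ * B),
      addself, add_zero]
  rw [eTL, eTR, eBL, eBR]
  exact hsd
end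

section
/- Let K be a field, let λ ∈ K be nonzero, let A be an n×n λ-circulant matrix over K, and let B be an n×n λ-reverse-circulant matrix over K (that is, B = C·J for some λ-circulant matrix C, where J is the n×n back-diagonal exchange matrix). Assume A·Aᵀ + B·Bᵀ = −I_n. Then the linear code generated by the block matrix (I_{2n} | M) with M = [[A, B], [−B, A]], i.e. the subspace {(x, Mᵀx) : x ∈ K^{2n}} of K^{4n}, is self-dual. -/
open Matrix

lemma mod3 (n x : ℕ) (hn : 0 < n) (hx : x < 3*n) :
    (x < n ∧ x % n = x) ∨ (n ≤ x ∧ x < 2*n ∧ x % n = x - n) ∨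
      (2*n ≤ x ∧ x % n = x - 2*n) := by
  rcases lt_or_ge x n with h | h
  · exact Or.inl ⟨h, Nat.mod_eq_of_lt h⟩
  rcases lt_or_ge x (2*n) with h2 | h2
  · refine Or.inr (Or.inl ⟨h, h2, ?_⟩)
    rw [Nat.mod_eq_sub_mod h]; exact Nat.mod_eq_of_lt (by omega)
  · refine Or.inr (Or.inr ⟨h2, ?_⟩)
    rw [Nat.mod_eq_sub_mod h, Nat.mod_eq_sub_mod (by omega)]
    rw [Nat.mod_eq_of_lt (by omega)]
    omega

lemma term_eq {K : Type*} [CommRing K] {n : ℕ} (lam : K) (a c : ℕ → K) (i j k p : Fin n)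
    (hp : (p:ℕ) = ((i:ℕ)+(j:ℕ)+n-(k:ℕ)) % n) :
    (if (i : ℕ) ≤ (k : ℕ) then a ((k : ℕ) - (i : ℕ)) else lam * a (n + (k : ℕ) - (i : ℕ))) *
    (if (k : ℕ) ≤ (j : ℕ) then c ((j : ℕ) - (k : ℕ)) else lam * c (n + (j : ℕ) - (k : ℕ))) =
    (if (i : ℕ) ≤ (p : ℕ) then c ((p : ℕ) - (i : ℕ)) else lam * c (n + (p : ℕ) - (i : ℕ))) *
    (if (p : ℕ) ≤ (j : ℕ) then a ((j : ℕ) - (p : ℕ)) else lam * a (n + (j : ℕ) - (p : ℕ))) := by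
  have hn : 0 < n := i.pos
  have hi := i.isLt
  have hj := j.isLt
  have hk := k.isLt
  have hplt := p.isLt
  have hkey := mod3 n ((i:ℕ)+(j:ℕ)+n-(k:ℕ)) hn (by omega)
  rw [← hp] at hkey
  split_ifs with h1 h2 h3 h4 <;>
    first
      | (exfalso; omega)
      | (first
          | rw [show (j:ℕ) - (p:ℕ) = (k:ℕ) - (i:ℕ) from by omega]
          | rw [show n + (j:ℕ) - (p:ℕ) = (k:ℕ) - (i:ℕ) from by omega]
          | rw [show (j:ℕ) - (p:ℕ) = n + (k:ℕ) - (i:ℕ) from by omega]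
          | rw [show n + (j:ℕ) - (p:ℕ) = n + (k:ℕ) - (i:ℕ) from by omega]) <;>
        (first
          | rw [show (p:ℕ) - (i:ℕ) = (j:ℕ) - (k:ℕ) from by omega]
          | rw [show n + (p:ℕ) - (i:ℕ) = (j:ℕ) - (k:ℕ) from by omega]
          | rw [show (p:ℕ) - (i:ℕ) = n + (j:ℕ) - (k:ℕ) from by omega]
          | rw [show n + (p:ℕ) - (i:ℕ) = n + (j:ℕ) - (k:ℕ) from by omega]) <;>
        ring
open Matrix

lemma lamCirc_mul_comm {K : Type*} [CommRing K] {n : ℕ} {lam : K}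
    {A C : Matrix (Fin n) (Fin n) K} (hA : IsLamCirculant lam A)
    (hC : IsLamCirculant lam C) : A * C = C * A := by
  obtain ⟨a, ha⟩ := hA
  obtain ⟨c, hc⟩ := hC
  ext i j
  have hn : 0 < n := i.pos
  rw [Matrix.mul_apply, Matrix.mul_apply]
  have hφ : Function.Involutive
      (fun k : Fin n => (⟨((i:ℕ)+(j:ℕ)+n-(k:ℕ)) % n, Nat.mod_lt _ hn⟩ : Fin n)) := by
    intro k
    have hi := i.isLt; have hj := j.isLt; have hk := k.isLt
    have h1 := mod3 n ((i:ℕ)+(j:ℕ)+n-(k:ℕ)) hn (by omega)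
    have hr1 : ((i:ℕ)+(j:ℕ)+n-(k:ℕ)) % n < n := Nat.mod_lt _ hn
    have h2 := mod3 n ((i:ℕ)+(j:ℕ)+n-(((i:ℕ)+(j:ℕ)+n-(k:ℕ)) % n)) hn (by omega)
    apply Fin.ext
    simp only [Fin.val_mk]
    omega
  refine Fintype.sum_equiv (Function.Involutive.toPerm _ hφ) _ _ fun k => ?_
  show A i k * C k j = C i ⟨_, _⟩ * A ⟨_, _⟩ j
  rw [ha i k, hc k j, hc i ⟨_, Nat.mod_lt _ hn⟩, ha ⟨_, Nat.mod_lt _ hn⟩ j]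
  exact term_eq lam a c i j k _ rfl


lemma exch_transpose {K : Type*} [CommRing K] {n : ℕ} :
    (exchMatrix K n)ᵀ = exchMatrix K n := by
  ext i j
  simp only [exchMatrix, transpose_apply, of_apply]
  rw [Nat.add_comm]

lemma lamCirc_mul_exch {K : Type*} [CommRing K] {n : ℕ} {lam : K}
    {A : Matrix (Fin n) (Fin n) K} (hA : IsLamCirculant lam A) :
    A * exchMatrix K n = exchMatrix K n * Aᵀ := by
  obtain ⟨a, ha⟩ := hA
  ext i j
  have hj : (j:ℕ) < n := j.isLt
  have hi : (i:ℕ) < n := i.isLt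
  rw [Matrix.mul_apply, Matrix.mul_apply]
  rw [Finset.sum_eq_single (⟨n - 1 - (j:ℕ), by omega⟩ : Fin n)]
  rotate_left
  · intro b _ hb
    have hbv := b.isLt
    simp only [exchMatrix, of_apply]
    rw [if_neg, mul_zero]
    intro hcon
    exact hb (Fin.ext (by simp only [Fin.val_mk]; omega))
  · intro hcon; exact absurd (Finset.mem_univ _) hcon
  rw [Finset.sum_eq_single (⟨n - 1 - (i:ℕ), by omega⟩ : Fin n)]
  rotate_left
  · intro b _ hb
    have hbv := b.isLt
    simp only [exchMatrix, of_apply]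
    rw [if_neg, zero_mul]
    intro hcon
    exact hb (Fin.ext (by simp only [Fin.val_mk]; omega))
  · intro hcon; exact absurd (Finset.mem_univ _) hcon
  simp only [exchMatrix, of_apply, Fin.val_mk, transpose_apply]
  rw [if_pos (by omega), if_pos (by omega), mul_one, one_mul]
  rw [ha i ⟨n - 1 - (j:ℕ), by omega⟩, ha j ⟨n - 1 - (i:ℕ), by omega⟩]
  simp only [Fin.val_mk]
  split_ifs with h1 h2
  · rw [show n - 1 - (j:ℕ) - (i:ℕ) = n - 1 - (i:ℕ) - (j:ℕ) from by omega]
  · exfalso; omega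
  · exfalso; omega
  · rw [show n + (n - 1 - (j:ℕ)) - (i:ℕ) = n + (n - 1 - (i:ℕ)) - (j:ℕ) from by omega]

/-- the modified four circulant construction with a `λ`-circulant `A`
and a `λ`-reverse-circulant `B` yields a self-dual code whenever `A Aᵀ + B Bᵀ = -I`. -/
theorem modFourCirculant_selfDual {K : Type*} [Field K] {n : ℕ}
    (lam : K) (hlam : lam ≠ 0)
    (A B : Matrix (Fin n) (Fin n) K)
    (hA : IsLamCirculant lam A)
    (hB : ∃ C : Matrix (Fin n) (Fin n) K, IsLamCirculant lam C ∧ B = C * exchMatrix K n)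
    (h : A * Aᵀ + B * Bᵀ = -1) :
    genCode (Matrix.fromBlocks A B (-B) A) =
      dualCode (genCode (Matrix.fromBlocks A B (-B) A)) := by
  set M := Matrix.fromBlocks A B (-B) A with hM
  have hBA : A * Bᵀ = B * Aᵀ := by
    obtain ⟨C, hC, rfl⟩ := hB
    have h1 := lamCirc_mul_exch hA
    have h2 := lamCirc_mul_exch hC
    have h3 := lamCirc_mul_comm hA hC
    calc A * (C * exchMatrix K n)ᵀ
        = A * ((exchMatrix K n)ᵀ * Cᵀ) := by rw [Matrix.transpose_mul]
      _ = A * exchMatrix K n * Cᵀ := by rw [exch_transpose, Matrix.mul_assoc]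
      _ = exchMatrix K n * Aᵀ * Cᵀ := by rw [h1]
      _ = exchMatrix K n * (C * A)ᵀ := by rw [Matrix.mul_assoc, ← Matrix.transpose_mul]
      _ = exchMatrix K n * (A * C)ᵀ := by rw [h3]
      _ = exchMatrix K n * Cᵀ * Aᵀ := by rw [Matrix.transpose_mul, Matrix.mul_assoc]
      _ = C * exchMatrix K n * Aᵀ := by rw [← h2]
  have hMMT : M * Mᵀ = -1 := by
    rw [hM, Matrix.fromBlocks_transpose, Matrix.fromBlocks_multiply]
    have e2 : A * (-B)ᵀ + B * Aᵀ = 0 := by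
      rw [Matrix.transpose_neg, Matrix.mul_neg, hBA, neg_add_cancel]
    have e3 : (-B) * Aᵀ + A * Bᵀ = 0 := by
      rw [Matrix.neg_mul, hBA, neg_add_cancel]
    have e4 : (-B) * (-B)ᵀ + A * Aᵀ = -1 := by
      rw [Matrix.transpose_neg, Matrix.neg_mul, Matrix.mul_neg, neg_neg, add_comm]
      exact h
    rw [h, e2, e3, e4]
    have : (-1 : Matrix (Fin n ⊕ Fin n) (Fin n ⊕ Fin n) K) =
        Matrix.fromBlocks (-1) (-0) (-0) (-1) := by
      rw [← Matrix.fromBlocks_neg, Matrix.fromBlocks_one]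
    rw [this, neg_zero]
  have hMTM : Mᵀ * M = -1 := by
    have h1 : M * (-Mᵀ) = 1 := by rw [Matrix.mul_neg, hMMT, neg_neg]
    have h2 : (-Mᵀ) * M = 1 := mul_eq_one_comm.mp h1
    rw [Matrix.neg_mul] at h2
    exact neg_eq_iff_eq_neg.mp h2
  ext v
  constructor
  · rintro ⟨x, rfl⟩
    intro y hy
    obtain ⟨z, rfl⟩ := hy
    show ∑ s : (Fin n ⊕ Fin n) ⊕ (Fin n ⊕ Fin n),
      Sum.elim x (Mᵀ *ᵥ x) s * Sum.elim z (Mᵀ *ᵥ z) s = 0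
    rw [Fintype.sum_sum_type]
    simp only [Sum.elim_inl, Sum.elim_inr]
    have h2 : ∑ i, (Mᵀ *ᵥ x) i * (Mᵀ *ᵥ z) i = (Mᵀ *ᵥ x) ⬝ᵥ (Mᵀ *ᵥ z) := rfl
    rw [h2, Matrix.dotProduct_mulVec, Matrix.vecMul_transpose, Matrix.mulVec_mulVec,
      hMMT, Matrix.neg_mulVec, Matrix.one_mulVec, neg_dotProduct]
    exact add_neg_eq_zero.mpr rfl
  · intro hv
    set v₁ : Fin n ⊕ Fin n → K := fun i => v (Sum.inl i) with hv₁
    set v₂ : Fin n ⊕ Fin n → K := fun i => v (Sum.inr i) with hv₂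
    have hz : ∀ z, (v₁ + M *ᵥ v₂) ⬝ᵥ z = 0 := by
      intro z
      have hmem : Sum.elim z (Mᵀ *ᵥ z) ∈ genCode M := ⟨z, rfl⟩
      have := hv _ hmem
      rw [Fintype.sum_sum_type] at this
      simp only [Sum.elim_inl, Sum.elim_inr] at this
      have h2 : ∑ i, v₂ i * (Mᵀ *ᵥ z) i = v₂ ⬝ᵥ (Mᵀ *ᵥ z) := rfl
      rw [show (∑ i, v (Sum.inr i) * (Mᵀ *ᵥ z) i) = v₂ ⬝ᵥ (Mᵀ *ᵥ z) from rfl,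
        Matrix.dotProduct_mulVec, Matrix.vecMul_transpose] at this
      rw [add_dotProduct]
      rw [show (∑ i, v (Sum.inl i) * z i) = v₁ ⬝ᵥ z from rfl] at this
      exact this
    have hv1 : v₁ = -(M *ᵥ v₂) := by
      funext i
      have := hz (Pi.single i 1)
      simp only [dotProduct, Pi.single_apply, mul_ite, mul_one, mul_zero,
        Finset.sum_ite_eq', Finset.mem_univ, if_true, Pi.add_apply] at this
      exact eq_neg_of_add_eq_zero_left this
    refine ⟨v₁, ?_⟩
    funext s
    cases s with
    | inl i => rfl
    | inr i =>
      have hvv : Mᵀ *ᵥ v₁ = v₂ := by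
        rw [hv1, Matrix.mulVec_neg, Matrix.mulVec_mulVec, hMTM, Matrix.neg_mulVec,
          Matrix.one_mulVec, neg_neg]
      show v (Sum.inr i) = (Mᵀ *ᵥ v₁) i
      rw [hvv]
end

section
/- Let R = F₂ + uF₂ be the ring F₂[u]/(u²) (the dual numbers over Z/2Z). Let C ⊆ Rⁿ be a self-dual code generated by the rows r₁, …, r_k of a k×n matrix G, let c be a unit in R with c² = 1, and let X ∈ Rⁿ satisfy ⟨X, X⟩ = 1 (Euclidean inner product). Set yᵢ = ⟨rᵢ, X⟩ for 1 ≤ i ≤ k. Then the R-submodule of R^{n+2} generated by the row (1, 0, X) together with the rows (yᵢ, c·yᵢ, rᵢ) for 1 ≤ i ≤ k is a self-dual code of length n + 2. -/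
open Matrix

section Extension

variable {K ι : Type*} [CommRing K] [Fintype ι]

theorem mem_dualCode_iff {C : Submodule K (ι → K)} {x : ι → K} :
    x ∈ dualCode C ↔ ∀ y ∈ C, x ⬝ᵥ y = 0 :=
  Iff.rfl

def extMap (c : K) (X : ι → K) : (ι → K) →ₗ[K] (Fin 2 ⊕ ι → K) where
  toFun z := Sum.elim ![z ⬝ᵥ X, c * (z ⬝ᵥ X)] z
  map_add' z z' := by
    ext (i | j)
    · fin_cases i <;> simp [add_dotProduct, mul_add]
    · rfl
  map_smul' t z := by
    ext (i | j)
    · fin_cases i <;> simp [smul_dotProduct, mul_left_comm]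
    · rfl

def extRow (X : ι → K) : Fin 2 ⊕ ι → K := Sum.elim ![1, 0] X

def extendCode (c : K) (X : ι → K) (C : Submodule K (ι → K)) : Submodule K (Fin 2 ⊕ ι → K) :=
  (K ∙ extRow X) ⊔ C.map (extMap c X)

variable {c : K} {X : ι → K} {C : Submodule K (ι → K)}

theorem extRow_mem_extendCode : extRow X ∈ extendCode c X C :=
  Submodule.mem_sup_left (Submodule.mem_span_singleton_self _)

theorem extMap_mem_extendCode {z : ι → K} (hz : z ∈ C) : extMap c X z ∈ extendCode c X C :=
  Submodule.mem_sup_right (Submodule.mem_map_of_mem hz)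

theorem mem_extendCode_iff {v : Fin 2 ⊕ ι → K} :
    v ∈ extendCode c X C ↔ ∃ t : K, ∃ z ∈ C, t • extRow X + extMap c X z = v := by
  simp only [extendCode, Submodule.mem_sup, Submodule.mem_span_singleton, Submodule.mem_map]
  constructor
  · rintro ⟨_, ⟨t, rfl⟩, _, ⟨z, hz, rfl⟩, rfl⟩
    exact ⟨t, z, hz, rfl⟩
  · rintro ⟨t, z, hz, rfl⟩
    exact ⟨_, ⟨t, rfl⟩, _, ⟨z, hz, rfl⟩, rfl⟩

theorem span_extRow_union_range_extMap {κ : Type*} (G : κ → ι → K) :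
    Submodule.span K ({extRow X} ∪ Set.range fun i => extMap c X (G i)) =
      extendCode c X (Submodule.span K (Set.range G)) := by
  rw [Submodule.span_union, Set.range_comp', ← Submodule.map_span, extendCode]

section CharTwo

variable [CharP K 2]

theorem extRow_dotProduct_extRow (hX : X ⬝ᵥ X = 1) : extRow X ⬝ᵥ extRow X = 0 := by
  simp [extRow, sumElim_dotProduct_sumElim, hX, CharTwo.add_self_eq_zero]

theorem extRow_dotProduct_extMap (z : ι → K) : extRow X ⬝ᵥ extMap c X z = 0 := by
  simp [extRow, extMap, sumElim_dotProduct_sumElim, dotProduct_comm X, CharTwo.add_self_eq_zero]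

theorem extMap_dotProduct_extMap (hc : c ^ 2 = 1) (z z' : ι → K) :
    extMap c X z ⬝ᵥ extMap c X z' = z ⬝ᵥ z' := by
  simp only [extMap, LinearMap.coe_mk, AddHom.coe_mk, sumElim_dotProduct_sumElim,
    cons_dotProduct_cons, dotProduct_of_isEmpty]
  linear_combination (z ⬝ᵥ X) * (z' ⬝ᵥ X) * (hc + (CharTwo.two_eq_zero : (2 : K) = 0))

theorem extendCode_le_dualCode (hC : C ≤ dualCode C) (hc : c ^ 2 = 1) (hX : X ⬝ᵥ X = 1) :
    extendCode c X C ≤ dualCode (extendCode c X C) := by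
  intro v hv
  rw [mem_dualCode_iff]
  intro w hw
  obtain ⟨t, z, hz, rfl⟩ := mem_extendCode_iff.1 hv
  obtain ⟨s, z', hz', rfl⟩ := mem_extendCode_iff.1 hw
  simp only [add_dotProduct, dotProduct_add, smul_dotProduct, dotProduct_smul,
    dotProduct_comm _ (extRow X), extRow_dotProduct_extRow hX, extRow_dotProduct_extMap,
    extMap_dotProduct_extMap hc, mem_dualCode_iff.1 (hC hz) z' hz', smul_zero, zero_add]

theorem dualCode_extendCode_le (hC : dualCode C ≤ C) (hc : c ^ 2 = 1) (hX : X ⬝ᵥ X = 1) :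
    dualCode (extendCode c X C) ≤ extendCode c X C := by
  intro v hv
  rw [mem_dualCode_iff] at hv
  obtain ⟨a, b, w, rfl⟩ : ∃ a b w, v = Sum.elim ![a, b] w :=
    ⟨v (.inl 0), v (.inl 1), v ∘ .inr, by ext (i | j) <;> [fin_cases i <;> rfl; rfl]⟩
  have hrow : a + w ⬝ᵥ X = 0 := by
    simpa [extRow, sumElim_dotProduct_sumElim] using hv _ extRow_mem_extendCode
  have hmap : ∀ z ∈ C, (a + b * c) * (z ⬝ᵥ X) + w ⬝ᵥ z = 0 := fun z hz => by
    have := hv _ (extMap_mem_extendCode hz)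
    simp only [extMap, LinearMap.coe_mk, AddHom.coe_mk, sumElim_dotProduct_sumElim,
      cons_dotProduct_cons, dotProduct_of_isEmpty] at this
    linear_combination this
  set t := a + b * c
  have hw' : w + t • X ∈ C := hC <| mem_dualCode_iff.2 fun z hz => by
    rw [add_dotProduct, smul_dotProduct, dotProduct_comm X]
    linear_combination hmap z hz
  have hw'X : (w + t • X) ⬝ᵥ X = b * c := by
    rw [add_dotProduct, smul_dotProduct, hX]
    linear_combination hrow
  refine mem_extendCode_iff.2 ⟨t, _, hw', ?_⟩
  have two : (2 : K) = 0 := CharTwo.two_eq_zero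
  ext (i | j)
  · fin_cases i
    · show t * 1 + (w + t • X) ⬝ᵥ X = a
      linear_combination hw'X + b * c * two
    · show t * 0 + c * ((w + t • X) ⬝ᵥ X) = b
      linear_combination c * hw'X + b * hc
  · show t * X j + (w j + t * X j) = w j
    linear_combination t * X j * two

theorem extendCode_eq_dualCode (hC : C = dualCode C) (hc : c ^ 2 = 1) (hX : X ⬝ᵥ X = 1) :
    extendCode c X C = dualCode (extendCode c X C) :=
  (extendCode_le_dualCode hC.le hc hX).antisymm (dualCode_extendCode_le hC.ge hc hX)

end CharTwo

end Extension

instance : CharP (DualNumber (ZMod 2)) 2 :=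
  charP_of_injective_algebraMap TrivSqZeroExt.inl_injective 2

theorem extension_selfDual_general {n k : ℕ}
    (G : Matrix (Fin k) (Fin n) (DualNumber (ZMod 2)))
    (C : Submodule (DualNumber (ZMod 2)) (Fin n → DualNumber (ZMod 2)))
    (hgen : C = Submodule.span (DualNumber (ZMod 2)) (Set.range fun i => G i))
    (hsd : C = dualCode C)
    (c : DualNumber (ZMod 2)) (hc2 : c ^ 2 = 1)
    (X : Fin n → DualNumber (ZMod 2)) (hX : ∑ i, X i * X i = 1) :
    (Submodule.span (DualNumber (ZMod 2))
        ({Sum.elim ![1, 0] X} ∪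
          Set.range fun i : Fin k =>
            Sum.elim ![∑ j, G i j * X j, c * ∑ j, G i j * X j] (G i)) :
        Submodule (DualNumber (ZMod 2)) (Fin 2 ⊕ Fin n → DualNumber (ZMod 2))) =
      dualCode (Submodule.span (DualNumber (ZMod 2))
        ({Sum.elim ![1, 0] X} ∪
          Set.range fun i : Fin k =>
            Sum.elim ![∑ j, G i j * X j, c * ∑ j, G i j * X j] (G i))) := by
  have h := extendCode_eq_dualCode hsd hc2 hX
  rw [hgen, ← span_extRow_union_range_extMap] at h
  exact h

/-- the extension theorem over `F₂ + uF₂ = F₂[u]/(u²)` (the dual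
numbers over `ZMod 2`): extending a self-dual code of length `n` by the row
`(1, 0, X)` and the rows `(yᵢ, c yᵢ, rᵢ)` gives a self-dual code of length `n + 2`. -/
theorem extension_selfDual {n k : ℕ}
    (G : Matrix (Fin k) (Fin n) (DualNumber (ZMod 2)))
    (C : Submodule (DualNumber (ZMod 2)) (Fin n → DualNumber (ZMod 2)))
    (hgen : C = Submodule.span (DualNumber (ZMod 2)) (Set.range fun i => G i))
    (hsd : C = dualCode C)
    (c : DualNumber (ZMod 2)) (hc : IsUnit c) (hc2 : c ^ 2 = 1)
    (X : Fin n → DualNumber (ZMod 2)) (hX : ∑ i, X i * X i = 1) :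
    (Submodule.span (DualNumber (ZMod 2))
        ({Sum.elim ![1, 0] X} ∪
          Set.range fun i : Fin k =>
            Sum.elim ![∑ j, G i j * X j, c * ∑ j, G i j * X j] (G i)) :
        Submodule (DualNumber (ZMod 2)) (Fin 2 ⊕ Fin n → DualNumber (ZMod 2))) =
      dualCode (Submodule.span (DualNumber (ZMod 2))
        ({Sum.elim ![1, 0] X} ∪
          Set.range fun i : Fin k =>
            Sum.elim ![∑ j, G i j * X j, c * ∑ j, G i j * X j] (G i))) :=
  extension_selfDual_general G C hgen hsd c hc2 X hX
end

section
/- Let R = F₂ + uF₂ be the ring F₂[u]/(u²) and let φ : Rⁿ → F₂^{2n} be the Gray map sending the vector with coordinates aᵢ + bᵢu (aᵢ, bᵢ ∈ F₂) to (b₁, …, bₙ, a₁ + b₁, …, aₙ + bₙ). If x, y ∈ Rⁿ satisfy ⟨x, y⟩ = 0, then ⟨φ(x), φ(y)⟩ = 0 in F₂. -/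
/-- The Gray map `(F₂ + uF₂)ⁿ → F₂^{2n}` sending `a + bu ↦ (b, a + b)`
coordinatewise, where `F₂ + uF₂` is realized as the dual numbers over `ZMod 2`
(so `a = fst`, `b = snd`). -/
def grayMap {n : ℕ} (x : Fin n → DualNumber (ZMod 2)) : (Fin n ⊕ Fin n) → ZMod 2 :=
  Sum.elim (fun i => TrivSqZeroExt.snd (x i))
    (fun i => TrivSqZeroExt.fst (x i) + TrivSqZeroExt.snd (x i))

/-- the Gray map `(F₂ + uF₂)ⁿ → F₂^{2n}`, `a + bu ↦ (b, a + b)`,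
preserves orthogonality. -/
theorem grayMap_orthogonal {n : ℕ} (x y : Fin n → DualNumber (ZMod 2))
    (h : ∑ i, x i * y i = 0) :
    ∑ s, grayMap x s * grayMap y s = 0 := by
  have hf := congrArg TrivSqZeroExt.fst h
  have hs := congrArg TrivSqZeroExt.snd h
  simp only [TrivSqZeroExt.fst_sum, TrivSqZeroExt.snd_sum, TrivSqZeroExt.fst_mul,
    TrivSqZeroExt.snd_mul, TrivSqZeroExt.fst_zero, TrivSqZeroExt.snd_zero,
    smul_eq_mul, op_smul_eq_mul] at hf hs
  rw [Fintype.sum_sum_type]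
  simp only [grayMap, Sum.elim_inl, Sum.elim_inr]
  have key : ∑ i, TrivSqZeroExt.snd (x i) * TrivSqZeroExt.snd (y i) +
      ∑ i, (TrivSqZeroExt.fst (x i) + TrivSqZeroExt.snd (x i)) *
        (TrivSqZeroExt.fst (y i) + TrivSqZeroExt.snd (y i)) =
      (∑ i, TrivSqZeroExt.fst (x i) * TrivSqZeroExt.fst (y i)) +
      (∑ i, (TrivSqZeroExt.fst (x i) * TrivSqZeroExt.snd (y i) +
         TrivSqZeroExt.snd (x i) * TrivSqZeroExt.fst (y i))) := by
    rw [← Finset.sum_add_distrib, ← Finset.sum_add_distrib]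
    apply Finset.sum_congr rfl
    intro i _
    have h2 : ∀ a : ZMod 2, a + a = 0 := by decide
    ring_nf
    generalize TrivSqZeroExt.fst (x i) = a
    generalize TrivSqZeroExt.snd (x i) = b
    generalize TrivSqZeroExt.fst (y i) = c
    generalize TrivSqZeroExt.snd (y i) = d
    revert a b c d; decide
  rw [key, hf, hs]
  simp
end
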